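/- arXiv:1905.05152 — 2 statements merged into one kernel-verified Lean document; each statement's English description precedes it below -/
import Mathlib

section
/- Let 𝓕 be a family of Laplace-Pego functions with a common order x ≥ 0 such that the family 𝓕_x = {f_x : f ∈ 𝓕} is bounded in L²((0,∞)). If 𝓕 is exponentially L²-equivanishing at x, then 𝓕 is Laplace equicontinuous at x. -/
open MeasureTheory Complex Filter Set

/-- The Laplace transform of `f : ℝ → ℂ` (thought of as a function on `(0,∞)`)
at the complex point `z`. -/
noncomputable def LaplaceTransform (f : ℝ → ℂ) (z : ℂ) : ℂ :=
  ∫ t in Set.Ioi (0 : ℝ), f t * Complex.exp (-z * t)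

/-- `f` is a Laplace-Pego function of order `x`: it is measurable and
`f_x : t ↦ f t * e^{-x t}` belongs to `L¹((0,∞)) ∩ L²((0,∞))`. -/
def IsLaplacePego (f : ℝ → ℂ) (x : ℝ) : Prop :=
  Measurable f ∧
  MeasureTheory.IntegrableOn (fun t : ℝ => f t * Real.exp (-x * t)) (Set.Ioi 0) ∧
  MeasureTheory.MemLp (fun t : ℝ => f t * Real.exp (-x * t)) 2
    (MeasureTheory.volume.restrict (Set.Ioi 0))

/-- The family `𝓕_x = {f_x : f ∈ 𝓕}` is bounded in `L²((0,∞))`: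
there is `M > 0` with `∫₀^∞ e^{-2xt} |f(t)|² dt < M` for all `f ∈ 𝓕`. -/
def L2BoundedFamily (𝓕 : Set (ℝ → ℂ)) (x : ℝ) : Prop :=
  ∃ M : ℝ, 0 < M ∧ ∀ f ∈ 𝓕,
    ∫ t in Set.Ioi (0 : ℝ), Real.exp (-(2 * x * t)) * ‖f t‖ ^ 2 < M

/-- `𝓕` is Laplace equicontinuous at `x`: for every `ε > 0` there is `δ > 0` with
`(1/(2π)) ∫_ℝ |𝓛{f}(x+iy+δ) - 𝓛{f}(x+iy)|² dy < ε` for all `f ∈ 𝓕`. -/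
def LaplaceEquicontinuous (𝓕 : Set (ℝ → ℂ)) (x : ℝ) : Prop :=
  ∀ ε : ℝ, 0 < ε → ∃ δ : ℝ, 0 < δ ∧ ∀ f ∈ 𝓕,
    (1 / (2 * Real.pi)) *
        ∫ y : ℝ,
          ‖LaplaceTransform f ((x : ℂ) + Complex.I * y + (δ : ℂ)) -
              LaplaceTransform f ((x : ℂ) + Complex.I * y)‖ ^ 2 < ε

/-- `𝓕` is exponentially `L²`-equivanishing at `x`: for every `ε > 0` there is `T > 0`
with `∫_T^∞ e^{-2xt} |f(t)|² dt < ε` for all `f ∈ 𝓕`. -/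
def ExpL2Equivanishing (𝓕 : Set (ℝ → ℂ)) (x : ℝ) : Prop :=
  ∀ ε : ℝ, 0 < ε → ∃ T : ℝ, 0 < T ∧ ∀ f ∈ 𝓕,
    ∫ t in Set.Ioi T, Real.exp (-(2 * x * t)) * ‖f t‖ ^ 2 < ε

/-- `𝓕` is exponentially `L²`-equicontinuous at `x`: for every `ε > 0` there is `δ > 0`
with `(∫₀^∞ e^{-2xt} |f(t) - f(t-s)|² dt)^{1/2} < ε` for all `s ∈ (0,δ)`, `f ∈ 𝓕`
(functions are extended by `0` for nonpositive arguments, so `f (t - s) = 0` when `t ≤ s`). -/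
def ExpL2Equicontinuous (𝓕 : Set (ℝ → ℂ)) (x : ℝ) : Prop :=
  ∀ ε : ℝ, 0 < ε → ∃ δ : ℝ, 0 < δ ∧ ∀ s ∈ Set.Ioo (0 : ℝ) δ, ∀ f ∈ 𝓕,
    Real.sqrt
        (∫ t in Set.Ioi (0 : ℝ),
          Real.exp (-(2 * x * t)) * ‖f t - f (t - s)‖ ^ 2) < ε

/-- `𝓕` is Laplace equivanishing at `x`: for every `ε > 0` there is `T > 0` with
`∫_{ℝ∖[-T,T]} |𝓛{f}(x+iy)|² dy < ε` for all `f ∈ 𝓕`. -/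
def LaplaceEquivanishing (𝓕 : Set (ℝ → ℂ)) (x : ℝ) : Prop :=
  ∀ ε : ℝ, 0 < ε → ∃ T : ℝ, 0 < T ∧ ∀ f ∈ 𝓕,
    ∫ y in (Set.Icc (-T) T)ᶜ,
      ‖LaplaceTransform f ((x : ℂ) + Complex.I * y)‖ ^ 2 < ε

/-!
On the line `Re z = x` the Laplace transform of `f` is the Fourier transform of `f_x`, so by
Plancherel `(1/2π) ∫ |𝓛f(x + δ + iy) - 𝓛f(x + iy)|² dy = ∫₀^∞ e^{-2xt} |f t|² (1 - e^{-δt})² dt`.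
On `(0, T]` the factor `(1 - e^{-δt})²` is at most `(δT)²`, which the uniform `L²` bound makes
small; on `(T, ∞)` it is at most `1`, and equivanishing makes the tail small.
-/

open scoped Real InnerProductSpace

section Plancherel

open FourierTransform

variable {V F : Type*} [NormedAddCommGroup V] [InnerProductSpace ℝ V] [FiniteDimensional ℝ V]
  [MeasurableSpace V] [BorelSpace V] [NormedAddCommGroup F] [InnerProductSpace ℂ F]

theorem MeasureTheory.Integrable.continuous_fourier {g : V → F} (hg : Integrable g) :
    Continuous (𝓕 g) :=
  VectorFourier.fourierIntegral_continuous Real.continuous_fourierChar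
    (innerSL ℝ).continuous₂ hg

theorem Real.fourier_sub {g₁ g₂ : V → F} (h₁ : Integrable g₁) (h₂ : Integrable g₂) (w : V) :
    𝓕 (g₁ - g₂) w = 𝓕 g₁ w - 𝓕 g₂ w := by
  simp only [Real.fourier_eq, Pi.sub_apply, smul_sub]
  exact integral_sub ((Real.fourierIntegral_convergent_iff w).2 h₁)
    ((Real.fourierIntegral_convergent_iff w).2 h₂)

variable [CompleteSpace F]

theorem MeasureTheory.Integrable.integral_fourier_smul_eq {φ : V → ℂ} {g : V → F}
    (hφ : Integrable φ) (hg : Integrable g) :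
    ∫ ξ, 𝓕 φ ξ • g ξ = ∫ x, φ x • 𝓕 g x := by
  simpa using! VectorFourier.integral_fourierIntegral_smul_eq_flip (L := innerₗ V)
    Real.continuous_fourierChar continuous_inner hφ hg

/-- Both sides define the same tempered distribution, by self-adjointness of the Fourier
integral. -/
theorem MeasureTheory.MemLp.coeFn_fourier_toLp {g : V → F} (hg₂ : MemLp g 2)
    (hg₁ : Integrable g) :
    ((𝓕 (hg₂.toLp g) : Lp F 2 (volume : Measure V)) : V → F) =ᵐ[volume] 𝓕 g := by
  refine ae_eq_of_integral_contDiff_smul_eq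
    ((Lp.memLp _).locallyIntegrable (by norm_num : (1 : ENNReal) ≤ 2))
    hg₁.continuous_fourier.locallyIntegrable fun φ hφ hφc => ?_
  set ψ : SchwartzMap V ℂ := (hφc.comp_left (g := Complex.ofRealCLM) rfl).toSchwartzMap
    (by fun_prop)
  calc ∫ x, φ x • ((𝓕 (hg₂.toLp g) : Lp F 2 (volume : Measure V)) : V → F) x
      = Lp.toTemperedDistribution (𝓕 (hg₂.toLp g) : Lp F 2 (volume : Measure V)) ψ := by
        simp [ψ]
    _ = ∫ x, 𝓕 ψ x • g x := by
        rw [← Lp.fourier_toTemperedDistribution_eq, TemperedDistribution.fourier_apply,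
          Lp.toTemperedDistribution_apply]
        exact integral_congr_ae (by filter_upwards [hg₂.coeFn_toLp] with x hx; rw [hx])
    _ = ∫ x, φ x • 𝓕 g x := by
        rw [SchwartzMap.fourier_coe, ψ.integrable.integral_fourier_smul_eq hg₁]
        simp [ψ]

theorem MeasureTheory.MemLp.integral_norm_sq_fourier {g : V → F} (hg₂ : MemLp g 2)
    (hg₁ : Integrable g) : ∫ ξ, ‖𝓕 g ξ‖ ^ 2 = ∫ x, ‖g x‖ ^ 2 := by
  set G : Lp F 2 (volume : Measure V) := hg₂.toLp g
  have hinner : ∫ ξ, ⟪𝓕 g ξ, 𝓕 g ξ⟫_ℂ = ∫ x, ⟪g x, g x⟫_ℂ :=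
    calc ∫ ξ, ⟪𝓕 g ξ, 𝓕 g ξ⟫_ℂ = ∫ ξ, ⟪(𝓕 G : Lp F 2 volume) ξ, (𝓕 G : Lp F 2 volume) ξ⟫_ℂ :=
          integral_congr_ae (by
            filter_upwards [hg₂.coeFn_fourier_toLp hg₁] with ξ hξ; rw [hξ])
      _ = ∫ x, ⟪G x, G x⟫_ℂ := by
          rw [← L2.inner_def, ← L2.inner_def, Lp.inner_fourier_eq]
      _ = ∫ x, ⟪g x, g x⟫_ℂ :=
          integral_congr_ae (by filter_upwards [hg₂.coeFn_toLp] with x hx; rw [hx])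
  apply Complex.ofRealLI.injective
  simpa [← LinearIsometry.integral_comp_comm, inner_self_eq_norm_sq_to_K] using hinner

end Plancherel

section LaplaceFourier

open FourierTransform

/-- The paper's `f_x`, extended by zero to the whole line. -/
noncomputable def expDamped (f : ℝ → ℂ) (x : ℝ) : ℝ → ℂ :=
  (Ioi 0).indicator fun t => f t * Real.exp (-x * t)

theorem laplaceTransform_eq_fourier_expDamped (f : ℝ → ℂ) (x y : ℝ) :
    LaplaceTransform f (x + I * y) = 𝓕 (expDamped f x) (y / (2 * π)) := by
  rw [Real.fourier_real_eq_integral_exp_smul, LaplaceTransform, expDamped,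
    ← integral_indicator measurableSet_Ioi]
  congr 1 with t
  by_cases ht : t ∈ Ioi (0 : ℝ)
  · simp only [indicator_of_mem ht, smul_eq_mul, ofReal_exp]
    rw [mul_left_comm, ← Complex.exp_add]
    congr 2
    push_cast
    field_simp
    ring
  · simp [indicator_of_notMem ht]

theorem norm_mul_exp_sq (z : ℂ) (r : ℝ) :
    ‖z * Real.exp r‖ ^ 2 = Real.exp (2 * r) * ‖z‖ ^ 2 := by
  rw [norm_mul, Complex.norm_real, Real.norm_of_nonneg (Real.exp_nonneg _), mul_pow,
    ← Real.exp_nat_mul]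
  push_cast
  ring

namespace IsLaplacePego

variable {f : ℝ → ℂ} {x : ℝ}

theorem mono (hf : IsLaplacePego f x) {x' : ℝ} (hxx' : x ≤ x') : IsLaplacePego f x' := by
  obtain ⟨hmeas, hint, hmem⟩ := hf
  have hmeas' : AEStronglyMeasurable (fun t : ℝ => f t * Real.exp (-x' * t))
      (volume.restrict (Ioi 0)) := by fun_prop
  have hle : ∀ᵐ t ∂volume.restrict (Ioi (0 : ℝ)),
      ‖f t * Real.exp (-x' * t)‖ ≤ ‖f t * Real.exp (-x * t)‖ := by
    filter_upwards [ae_restrict_mem measurableSet_Ioi] with t (ht : 0 < t)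
    simp only [norm_mul, Complex.norm_real, Real.norm_of_nonneg (Real.exp_nonneg _)]
    gcongr
  exact ⟨hmeas, Integrable.mono hint hmeas' hle, hmem.of_le hmeas' hle⟩

theorem integrable_expDamped (hf : IsLaplacePego f x) : Integrable (expDamped f x) :=
  (integrable_indicator_iff measurableSet_Ioi).2 hf.2.1

theorem memLp_expDamped (hf : IsLaplacePego f x) : MemLp (expDamped f x) 2 :=
  (memLp_indicator_iff_restrict measurableSet_Ioi).2 hf.2.2

theorem integrableOn_exp_mul_norm_sq (hf : IsLaplacePego f x) :
    IntegrableOn (fun t => Real.exp (-(2 * x * t)) * ‖f t‖ ^ 2) (Ioi 0) := by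
  refine ((memLp_two_iff_integrable_sq_norm hf.2.2.1).1 hf.2.2).congr
    (Eventually.of_forall fun t => ?_)
  simp only [norm_mul_exp_sq]
  ring_nf

end IsLaplacePego

theorem norm_sq_expDamped_add_sub (f : ℝ → ℂ) (x δ t : ℝ) :
    ‖(expDamped f (x + δ) - expDamped f x) t‖ ^ 2 = (Ioi 0).indicator
      (fun t => Real.exp (-(2 * x * t)) * ‖f t‖ ^ 2 * (1 - Real.exp (-δ * t)) ^ 2) t := by
  by_cases ht : t ∈ Ioi (0 : ℝ)
  · have hfactor : f t * Real.exp (-(x + δ) * t) - f t * Real.exp (-x * t)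
        = f t * Real.exp (-x * t) * (Real.exp (-δ * t) - 1 : ℝ) := by
      push_cast
      rw [mul_sub, mul_assoc, ← Complex.exp_add]
      ring_nf
    simp only [expDamped, Pi.sub_apply, indicator_of_mem ht, hfactor]
    rw [norm_mul, mul_pow, norm_mul_exp_sq, Complex.norm_real, Real.norm_eq_abs, sq_abs]
    ring_nf
  · simp [expDamped, indicator_of_notMem ht]

theorem IsLaplacePego.integral_norm_laplaceTransform_sub_sq {f : ℝ → ℂ} {x δ : ℝ}
    (hf : IsLaplacePego f x) (hδ : 0 ≤ δ) :
    ∫ y : ℝ, ‖LaplaceTransform f (x + I * y + δ) - LaplaceTransform f (x + I * y)‖ ^ 2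
      = 2 * π * ∫ t in Ioi 0,
          Real.exp (-(2 * x * t)) * ‖f t‖ ^ 2 * (1 - Real.exp (-δ * t)) ^ 2 := by
  have hf' := hf.mono (le_add_of_nonneg_right hδ)
  have hfourier : ∀ y : ℝ, LaplaceTransform f (x + I * y + δ) - LaplaceTransform f (x + I * y)
      = 𝓕 (expDamped f (x + δ) - expDamped f x) (y / (2 * π)) := fun y => by
    rw [Real.fourier_sub hf'.integrable_expDamped hf.integrable_expDamped,
      ← laplaceTransform_eq_fourier_expDamped, ← laplaceTransform_eq_fourier_expDamped]
    push_cast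
    ring_nf
  simp_rw [hfourier]
  rw [Measure.integral_comp_div (fun ξ => ‖𝓕 (expDamped f (x + δ) - expDamped f x) ξ‖ ^ 2),
    (hf'.memLp_expDamped.sub hf.memLp_expDamped).integral_norm_sq_fourier
      (hf'.integrable_expDamped.sub hf.integrable_expDamped)]
  simp_rw [norm_sq_expDamped_add_sub]
  rw [integral_indicator measurableSet_Ioi, abs_of_pos (by positivity), smul_eq_mul]

end LaplaceFourier

theorem mul_one_sub_exp_neg_mul_sq_le {φ : ℝ → ℝ} {δ T t : ℝ} (hφ : 0 ≤ φ t) (hδ : 0 ≤ δ)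
    (ht : 0 ≤ t) :
    φ t * (1 - Real.exp (-δ * t)) ^ 2 ≤ (δ * T) ^ 2 * φ t + (Ioi T).indicator φ t := by
  have hexp_le : Real.exp (-δ * t) ≤ 1 := Real.exp_le_one_iff.2 (by nlinarith)
  by_cases htT : t ≤ T
  · have hlin : 1 - δ * t ≤ Real.exp (-δ * t) := by linarith [Real.add_one_le_exp (-δ * t)]
    have hsq : (1 - Real.exp (-δ * t)) ^ 2 ≤ (δ * T) ^ 2 :=
      pow_le_pow_left₀ (by linarith) (by nlinarith) 2
    rw [indicator_of_notMem (by simpa using htT), add_zero, mul_comm]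
    exact mul_le_mul_of_nonneg_right hsq hφ
  · have hsq : (1 - Real.exp (-δ * t)) ^ 2 ≤ 1 := by
      nlinarith [Real.exp_pos (-δ * t)]
    rw [indicator_of_mem (by simpa using htT)]
    nlinarith [sq_nonneg (δ * T)]

theorem setIntegral_mul_one_sub_exp_neg_mul_sq_le {φ : ℝ → ℝ} (hφ : IntegrableOn φ (Ioi 0))
    (hφ₀ : ∀ t, 0 ≤ φ t) {δ T : ℝ} (hδ : 0 ≤ δ) (hT : 0 ≤ T) :
    ∫ t in Ioi 0, φ t * (1 - Real.exp (-δ * t)) ^ 2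
      ≤ (δ * T) ^ 2 * (∫ t in Ioi 0, φ t) + ∫ t in Ioi T, φ t := by
  have hφT : IntegrableOn ((Ioi T).indicator φ) (Ioi 0) :=
    hφ.indicator measurableSet_Ioi
  calc ∫ t in Ioi 0, φ t * (1 - Real.exp (-δ * t)) ^ 2
      ≤ ∫ t in Ioi 0, ((δ * T) ^ 2 * φ t + (Ioi T).indicator φ t) := by
        refine integral_mono_of_nonneg (Eventually.of_forall fun t => by
          have := hφ₀ t; positivity) ((hφ.const_mul _).add hφT) ?_
        filter_upwards [ae_restrict_mem measurableSet_Ioi] with t (ht : 0 < t)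
        exact mul_one_sub_exp_neg_mul_sq_le (hφ₀ t) hδ ht.le
    _ = (δ * T) ^ 2 * (∫ t in Ioi 0, φ t) + ∫ t in Ioi T, φ t := by
        rw [integral_add (hφ.const_mul _) hφT, integral_const_mul,
          setIntegral_indicator measurableSet_Ioi, Ioi_inter_Ioi, max_eq_right hT]

theorem laplaceEquicontinuous_of_expL2Equivanishing_general (𝓕 : Set (ℝ → ℂ)) (x : ℝ)
    (h𝓕 : ∀ f ∈ 𝓕, IsLaplacePego f x)
    (hbdd : L2BoundedFamily 𝓕 x) (hvan : ExpL2Equivanishing 𝓕 x) :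
    LaplaceEquicontinuous 𝓕 x := by
  intro ε hε
  obtain ⟨M, hM, hMbound⟩ := hbdd
  obtain ⟨T, hT, hTtail⟩ := hvan (ε / 2) (half_pos hε)
  set δ := √(ε / (2 * M)) / T
  have hδT : (δ * T) ^ 2 = ε / (2 * M) := by
    rw [div_mul_cancel₀ _ hT.ne', Real.sq_sqrt (by positivity)]
  refine ⟨δ, by positivity, fun f hf => ?_⟩
  rw [(h𝓕 f hf).integral_norm_laplaceTransform_sub_sq (by positivity)]
  calc 1 / (2 * π) * (2 * π * ∫ t in Ioi 0,
          Real.exp (-(2 * x * t)) * ‖f t‖ ^ 2 * (1 - Real.exp (-δ * t)) ^ 2)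
      = ∫ t in Ioi 0, Real.exp (-(2 * x * t)) * ‖f t‖ ^ 2 * (1 - Real.exp (-δ * t)) ^ 2 := by
        rw [← mul_assoc, one_div_mul_cancel (by positivity), one_mul]
    _ ≤ (δ * T) ^ 2 * (∫ t in Ioi 0, Real.exp (-(2 * x * t)) * ‖f t‖ ^ 2)
          + ∫ t in Ioi T, Real.exp (-(2 * x * t)) * ‖f t‖ ^ 2 :=
        setIntegral_mul_one_sub_exp_neg_mul_sq_le (h𝓕 f hf).integrableOn_exp_mul_norm_sq
          (fun t => by positivity) (by positivity) hT.le
    _ < ε / (2 * M) * M + ε / 2 := by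
        rw [hδT]
        gcongr
        exacts [hMbound f hf, hTtail f hf]
    _ = ε := by field_simp; ring

/-- if `𝓕_x` is `L²`-bounded, then exponential `L²`-equivanishing at `x`
implies Laplace equicontinuity at `x`. -/
theorem laplaceEquicontinuous_of_expL2Equivanishing (𝓕 : Set (ℝ → ℂ)) (x : ℝ)
    (hx : 0 ≤ x) (h𝓕 : ∀ f ∈ 𝓕, IsLaplacePego f x)
    (hbdd : L2BoundedFamily 𝓕 x) (hvan : ExpL2Equivanishing 𝓕 x) :
    LaplaceEquicontinuous 𝓕 x :=
  laplaceEquicontinuous_of_expL2Equivanishing_general 𝓕 x h𝓕 hbdd hvan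
end

section
/- Let 𝓕 be a family of Laplace-Pego functions with a common order x ≥ 0 such that the family 𝓕_x = {f_x: f ∈ 𝓕} is bounded in L²((0,∞)). If the family 𝓕_x is L²-equicontinuous, i.e. for every ε > 0 there exists δ > 0 such that for all s ∈ (0,δ) and all f ∈ 𝓕, ∫₀^∞ |e^{-x·(t+s)}·f(t+s) - e^{-x·t}·f(t)|² dt < ε, then 𝓕 is exponentially L²-equicontinuous at x. -/
open MeasureTheory Complex Filter Set

open scoped ENNReal Topology

/-!
Write `g = f_x`. Then `e^{-xt} (f t - f (t - s)) = g t - e^{-xs} g (t - s)`, so the weighted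
difference has `L²` norm at most `‖g - g(· - s)‖ + |1 - e^{-xs}| ‖g‖`. Since `g` vanishes on
`(-∞, 0]`, `‖g - g(· - s)‖` is at most the hypothesis term `‖g(· + s) - g‖_{L²(0,∞)}` plus the
boundary term `‖g‖_{L²(0,s]}`. The boundary term is itself controlled by the hypothesis: for every
`σ ∈ (0, δ)` it is at most `‖g(· + σ) - g‖_{L²(0,∞)} + ‖g(· + σ)‖_{L²(0,s]}`, and averaging the
last term over `σ` (Tonelli) produces a `σ` with `‖g(· + σ)‖²_{L²(0,s]} ≤ (s/δ) ‖g‖²`. All bounds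
depend on `f` only through `‖g‖`, which is uniformly bounded over the family.
-/

section LpNorm

variable {α E : Type*} [MeasurableSpace α] {μ : Measure α} [NormedAddCommGroup E] {h : α → E}

theorem eLpNorm_two_rpow_two_eq_lintegral :
    eLpNorm h 2 μ ^ (2 : ℝ) = ∫⁻ a, ‖h a‖ₑ ^ (2 : ℝ) ∂μ := by
  simpa using eLpNorm_nnreal_pow_eq_lintegral (f := h) (μ := μ) (p := 2) two_ne_zero

theorem sqrt_integral_norm_sq_eq_lpNorm (hh : AEStronglyMeasurable h μ) :
    √(∫ a, ‖h a‖ ^ 2 ∂μ) = lpNorm h 2 μ := by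
  rw [lpNorm_eq_integral_norm_rpow_toReal two_ne_zero ENNReal.ofNat_ne_top hh,
    Real.sqrt_eq_rpow]
  norm_num

theorem eLpNorm_two_le_of_integral_norm_sq_le (hh : MemLp h 2 μ) {η : ℝ} (hη : 0 ≤ η)
    (hint : ∫ a, ‖h a‖ ^ 2 ∂μ ≤ η ^ 2) : eLpNorm h 2 μ ≤ ENNReal.ofReal η := by
  rw [← ofReal_lpNorm hh, ← sqrt_integral_norm_sq_eq_lpNorm hh.1]
  exact ENNReal.ofReal_le_ofReal (Real.sqrt_le_iff.2 ⟨hη, hint⟩)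

end LpNorm

section Translation

variable {E : Type*} [NormedAddCommGroup E] {g : ℝ → E}

theorem exists_mem_Ioo_setLIntegral_comp_add_le {φ : ℝ → ℝ≥0∞} (hφ : Measurable φ) {δ : ℝ}
    (hδ : 0 < δ) (S : Set ℝ) :
    ∃ σ ∈ Ioo 0 δ, ∫⁻ t in S, φ (t + σ) ≤ volume S / ENNReal.ofReal δ * ∫⁻ t, φ t := by
  have hφ₂ : Measurable (Function.uncurry fun σ t => φ (t + σ)) :=
    hφ.comp (measurable_snd.add measurable_fst)
  obtain ⟨σ, hσ, hle⟩ := exists_le_setLAverage (μ := volume) (s := Ioo 0 δ)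
    (by simp [hδ]) (by simp) (hφ₂.lintegral_prod_right' (ν := volume.restrict S)).aemeasurable
  refine ⟨σ, hσ, hle.trans ?_⟩
  have htotal : ∫⁻ σ in Ioo 0 δ, ∫⁻ t in S, φ (t + σ) ≤ volume S * ∫⁻ t, φ t := by
    rw [lintegral_lintegral_swap hφ₂.aemeasurable]
    calc ∫⁻ t in S, ∫⁻ σ in Ioo 0 δ, φ (t + σ) ≤ ∫⁻ _ in S, ∫⁻ t, φ t := by
          refine lintegral_mono fun t => ?_
          calc ∫⁻ σ in Ioo 0 δ, φ (t + σ) ≤ ∫⁻ σ, φ (t + σ) := setLIntegral_le_lintegral _ _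
            _ = ∫⁻ t, φ t := lintegral_add_left_eq_self φ t
      _ = volume S * ∫⁻ t, φ t := by rw [setLIntegral_const, mul_comm]
  rw [setLAverage_eq, Real.volume_Ioo, sub_zero, ENNReal.div_eq_inv_mul, ENNReal.div_eq_inv_mul,
    mul_assoc]
  exact mul_le_mul_right htotal _

theorem exists_mem_Ioo_eLpNorm_comp_add_le (hg : StronglyMeasurable g) {δ s : ℝ} (hδ : 0 < δ)
    (hs : 0 ≤ s) : ∃ σ ∈ Ioo 0 δ, eLpNorm (fun t => g (t + σ)) 2 (volume.restrict (Ioc 0 s)) ≤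
      ENNReal.ofReal √(s / δ) * eLpNorm g 2 volume := by
  obtain ⟨σ, hσ, hle⟩ := exists_mem_Ioo_setLIntegral_comp_add_le
    (hg.enorm.pow_const (2 : ℝ)) hδ (Ioc 0 s)
  refine ⟨σ, hσ, (ENNReal.rpow_le_rpow_iff (z := 2) two_pos).1 ?_⟩
  rw [eLpNorm_two_rpow_two_eq_lintegral, ENNReal.mul_rpow_of_nonneg _ _ zero_le_two,
    eLpNorm_two_rpow_two_eq_lintegral,
    ENNReal.ofReal_rpow_of_nonneg (Real.sqrt_nonneg _) zero_le_two, Real.rpow_two, Real.sq_sqrt (div_nonneg hs hδ.le), ENNReal.ofReal_div_of_pos hδ]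
  simpa using hle

theorem eLpNorm_restrict_Ioc_le_of_shift (hg : StronglyMeasurable g) {δ s : ℝ} {η : ℝ≥0∞}
    (hδ : 0 < δ) (hs : 0 ≤ s)
    (hshift : ∀ σ ∈ Ioo 0 δ, eLpNorm (fun t => g (t + σ) - g t) 2 (volume.restrict (Ioi 0)) ≤ η) :
    eLpNorm g 2 (volume.restrict (Ioc 0 s)) ≤ η + ENNReal.ofReal √(s / δ) * eLpNorm g 2 volume := by
  obtain ⟨σ, hσ, hσs⟩ := exists_mem_Ioo_eLpNorm_comp_add_le hg hδ hs
  have hgσ : StronglyMeasurable fun t => g (t + σ) := hg.comp_measurable (measurable_add_const σ)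
  calc eLpNorm g 2 (volume.restrict (Ioc 0 s))
      = eLpNorm (fun t => g (t + σ) - (g (t + σ) - g t)) 2 (volume.restrict (Ioc 0 s)) := by
        simp
    _ ≤ eLpNorm (fun t => g (t + σ)) 2 (volume.restrict (Ioc 0 s)) +
          eLpNorm (fun t => g (t + σ) - g t) 2 (volume.restrict (Ioc 0 s)) :=
        eLpNorm_sub_le hgσ.aestronglyMeasurable (hgσ.sub hg).aestronglyMeasurable one_le_two
    _ ≤ ENNReal.ofReal √(s / δ) * eLpNorm g 2 volume + η := by
        gcongr
        exact (eLpNorm_mono_measure _ (Measure.restrict_mono Ioc_subset_Ioi_self le_rfl)).trans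
          (hshift σ hσ)
    _ = η + ENNReal.ofReal √(s / δ) * eLpNorm g 2 volume := add_comm _ _

theorem eLpNorm_sub_comp_sub_le (hg : StronglyMeasurable g) (hg0 : ∀ t ≤ 0, g t = 0)
    {p : ℝ≥0∞} (hp : 1 ≤ p) {s : ℝ} (hs : 0 ≤ s) :
    eLpNorm (fun t => g t - g (t - s)) p volume ≤
      eLpNorm (fun t => g (t + s) - g t) p (volume.restrict (Ioi 0)) +
        eLpNorm g p (volume.restrict (Ioc 0 s)) := by
  have hsplit : (fun t => g t - g (t - s)) =
      (Ioi s).indicator (fun t => g t - g (t - s)) + (Ioc 0 s).indicator g := by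
    funext t
    rcases le_or_gt t 0 with ht | ht
    · simp [hg0 t ht, hg0 (t - s) (by linarith), ht.trans hs, ht.not_gt]
    rcases le_or_gt t s with hts | hts
    · simp [hg0 (t - s) (by linarith), ht, hts, hts.not_gt]
    · simp [hts, hts.not_ge]
  have hshift : MeasurePreserving (· + s) (volume.restrict (Ioi 0)) (volume.restrict (Ioi s)) := by
    simpa using
      (measurePreserving_add_right volume s).restrict_preimage (measurableSet_Ioi (a := s))
  have hdiff : StronglyMeasurable fun t => g t - g (t - s) :=
    hg.sub (hg.comp_measurable (measurable_sub_const s))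
  rw [hsplit]
  refine (eLpNorm_add_le ((hdiff.indicator measurableSet_Ioi).aestronglyMeasurable)
    ((hg.indicator measurableSet_Ioc).aestronglyMeasurable) hp).trans_eq ?_
  rw [eLpNorm_indicator_eq_eLpNorm_restrict measurableSet_Ioi,
    eLpNorm_indicator_eq_eLpNorm_restrict measurableSet_Ioc,
    ← eLpNorm_comp_measurePreserving hdiff.aestronglyMeasurable hshift]
  simp [Function.comp_def]

theorem eLpNorm_sub_smul_comp_sub_le {𝕜 : Type*} [NormedField 𝕜] [NormedSpace 𝕜 E]
    (hg : StronglyMeasurable g) {p : ℝ≥0∞} (hp : 1 ≤ p) (c : 𝕜) (s : ℝ) :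
    eLpNorm (fun t => g t - c • g (t - s)) p volume ≤
      eLpNorm (fun t => g t - g (t - s)) p volume + ‖1 - c‖ₑ * eLpNorm g p volume := by
  have hgs : StronglyMeasurable fun t => g (t - s) := hg.comp_measurable (measurable_sub_const s)
  have hsplit : (fun t => g t - c • g (t - s)) =
      (fun t => g t - g (t - s)) + (1 - c) • fun t => g (t - s) := by
    funext t
    simp [sub_smul]
  rw [hsplit]
  refine (eLpNorm_add_le (hg.sub hgs).aestronglyMeasurable
    (hgs.const_smul _).aestronglyMeasurable hp).trans ?_
  grw [eLpNorm_const_smul_le]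
  rw [← eLpNorm_comp_measurePreserving hg.aestronglyMeasurable
    (measurePreserving_sub_right volume s)]
  rfl

theorem eLpNorm_sub_smul_comp_sub_le_of_shift {𝕜 : Type*} [NormedField 𝕜] [NormedSpace 𝕜 E]
    (hg : StronglyMeasurable g) (hg0 : ∀ t ≤ 0, g t = 0) {δ s : ℝ} {η : ℝ≥0∞} (hδ : 0 < δ)
    (hs : s ∈ Ioo 0 δ)
    (hshift : ∀ σ ∈ Ioo 0 δ, eLpNorm (fun t => g (t + σ) - g t) 2 (volume.restrict (Ioi 0)) ≤ η)
    (c : 𝕜) :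
    eLpNorm (fun t => g t - c • g (t - s)) 2 volume ≤
      2 * η + (ENNReal.ofReal √(s / δ) + ‖1 - c‖ₑ) * eLpNorm g 2 volume :=
  calc eLpNorm (fun t => g t - c • g (t - s)) 2 volume
      ≤ eLpNorm (fun t => g t - g (t - s)) 2 volume + ‖1 - c‖ₑ * eLpNorm g 2 volume :=
        eLpNorm_sub_smul_comp_sub_le hg one_le_two c s
    _ ≤ (η + (η + ENNReal.ofReal √(s / δ) * eLpNorm g 2 volume)) +
          ‖1 - c‖ₑ * eLpNorm g 2 volume := by
        grw [eLpNorm_sub_comp_sub_le hg hg0 one_le_two hs.1.le, hshift s hs,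
          eLpNorm_restrict_Ioc_le_of_shift hg hδ hs.1.le hshift]
    _ = 2 * η + (ENNReal.ofReal √(s / δ) + ‖1 - c‖ₑ) * eLpNorm g 2 volume := by ring

end Translation

section ExpWeight

variable {x : ℝ} {f : ℝ → ℂ}

/-- The paper's `f_x`. -/
noncomputable def expWeight (x : ℝ) (f : ℝ → ℂ) (t : ℝ) : ℂ :=
  Real.exp (-(x * t)) * f t

theorem norm_expWeight_sq (x : ℝ) (f : ℝ → ℂ) (t : ℝ) :
    ‖expWeight x f t‖ ^ 2 = Real.exp (-(2 * x * t)) * ‖f t‖ ^ 2 := by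
  rw [expWeight, norm_mul, Complex.norm_real, Real.norm_of_nonneg (Real.exp_pos _).le, mul_pow,
    ← Real.exp_nat_mul]
  ring_nf

theorem exp_mul_norm_sub_sq (x : ℝ) (f : ℝ → ℂ) (s t : ℝ) :
    Real.exp (-(2 * x * t)) * ‖f t - f (t - s)‖ ^ 2 =
      ‖expWeight x f t - Real.exp (-(x * s)) • expWeight x f (t - s)‖ ^ 2 := by
  rw [← norm_expWeight_sq x (fun t => f t - f (t - s))]
  congr 1
  simp only [expWeight, Complex.real_smul, ← mul_assoc, ← Complex.ofReal_mul, ← Real.exp_add]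
  ring_nf

theorem stronglyMeasurable_expWeight (hf : Measurable f) : StronglyMeasurable (expWeight x f) :=
  (by unfold expWeight; fun_prop : Measurable (expWeight x f)).stronglyMeasurable

theorem expWeight_of_nonpos (hf0 : ∀ t ≤ 0, f t = 0) {t : ℝ} (ht : t ≤ 0) :
    expWeight x f t = 0 := by
  simp [expWeight, hf0 t ht]

theorem eLpNorm_expWeight_restrict_Ioi (hf0 : ∀ t ≤ 0, f t = 0) (p : ℝ≥0∞) :
    eLpNorm (expWeight x f) p (volume.restrict (Ioi 0)) = eLpNorm (expWeight x f) p volume :=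
  eLpNorm_restrict_eq_of_support_subset fun _ ht =>
    not_le.1 fun h => ht (expWeight_of_nonpos hf0 h)

theorem memLp_expWeight (hf : IsLaplacePego f x) (hf0 : ∀ t ≤ 0, f t = 0) :
    MemLp (expWeight x f) 2 volume := by
  have hLp : MemLp (expWeight x f) 2 (volume.restrict (Ioi 0)) := by
    convert hf.2.2 using 2
    rw [expWeight, neg_mul, mul_comm]
  exact ⟨(stronglyMeasurable_expWeight hf.1).aestronglyMeasurable,
    eLpNorm_expWeight_restrict_Ioi hf0 2 ▸ hLp.2⟩

theorem eLpNorm_expWeight_le (hf : IsLaplacePego f x) (hf0 : ∀ t ≤ 0, f t = 0) {M : ℝ}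
    (hM : ∫ t in Ioi 0, Real.exp (-(2 * x * t)) * ‖f t‖ ^ 2 ≤ M) :
    eLpNorm (expWeight x f) 2 volume ≤ ENNReal.ofReal √M := by
  have hM₀ : 0 ≤ M := (integral_nonneg fun t => by positivity).trans hM
  rw [← eLpNorm_expWeight_restrict_Ioi hf0]
  refine eLpNorm_two_le_of_integral_norm_sq_le ((memLp_expWeight hf hf0).restrict _)
    (Real.sqrt_nonneg M) ?_
  simpa [norm_expWeight_sq, Real.sq_sqrt hM₀] using hM

theorem sqrt_integral_exp_mul_norm_sub_sq_le (hf : IsLaplacePego f x) (hf0 : ∀ t ≤ 0, f t = 0)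
    {M δ η s : ℝ} (hM : ∫ t in Ioi 0, Real.exp (-(2 * x * t)) * ‖f t‖ ^ 2 ≤ M) (hη : 0 ≤ η)
    (hδ : 0 < δ) (hs : s ∈ Ioo 0 δ)
    (hshift : ∀ σ ∈ Ioo 0 δ,
      ∫ t in Ioi 0, ‖expWeight x f (t + σ) - expWeight x f t‖ ^ 2 ≤ η ^ 2) :
    √(∫ t in Ioi 0, Real.exp (-(2 * x * t)) * ‖f t - f (t - s)‖ ^ 2) ≤
      2 * η + (√(s / δ) + ‖1 - Real.exp (-(x * s))‖) * √M := by
  have hg := memLp_expWeight hf hf0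
  have hgm := stronglyMeasurable_expWeight (x := x) hf.1
  have hshift' : ∀ σ ∈ Ioo 0 δ, eLpNorm (fun t => expWeight x f (t + σ) - expWeight x f t) 2
      (volume.restrict (Ioi 0)) ≤ ENNReal.ofReal η := fun σ hσ =>
    eLpNorm_two_le_of_integral_norm_sq_le
      (((hg.comp_measurePreserving (measurePreserving_add_right volume σ)).sub hg).restrict _)
      hη (hshift σ hσ)
  have hH : StronglyMeasurable
      fun t => expWeight x f t - Real.exp (-(x * s)) • expWeight x f (t - s) :=
    hgm.sub ((hgm.comp_measurable (measurable_sub_const s)).const_smul (Real.exp (-(x * s))))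
  simp_rw [exp_mul_norm_sub_sq x f s]
  rw [sqrt_integral_norm_sq_eq_lpNorm hH.aestronglyMeasurable.restrict,
    ← toReal_eLpNorm hH.aestronglyMeasurable.restrict]
  refine ENNReal.toReal_le_of_le_ofReal (by positivity) ?_
  grw [eLpNorm_mono_measure _ Measure.restrict_le_self,
    eLpNorm_sub_smul_comp_sub_le_of_shift hgm (fun _ => expWeight_of_nonpos hf0) hδ hs hshift',
    eLpNorm_expWeight_le hf hf0 hM]
  rw [← ofReal_norm, ← ENNReal.ofReal_add (by positivity) (by positivity),
    ← ENNReal.ofReal_mul (by positivity), ← ENNReal.ofReal_ofNat 2,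
    ← ENNReal.ofReal_mul zero_le_two, ← ENNReal.ofReal_add (by positivity) (by positivity)]

end ExpWeight

theorem expL2Equicontinuous_of_l2Equicontinuous_general (𝓕 : Set (ℝ → ℂ)) (x : ℝ)
    (h𝓕 : ∀ f ∈ 𝓕, IsLaplacePego f x)
    (hzero : ∀ f ∈ 𝓕, ∀ t : ℝ, t ≤ 0 → f t = 0)
    (hbdd : L2BoundedFamily 𝓕 x)
    (hequi : ∀ ε : ℝ, 0 < ε → ∃ δ : ℝ, 0 < δ ∧ ∀ s ∈ Set.Ioo (0 : ℝ) δ, ∀ f ∈ 𝓕,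
      ∫ t in Set.Ioi (0 : ℝ),
        ‖(Real.exp (-(x * (t + s))) : ℂ) * f (t + s) -
          (Real.exp (-(x * t)) : ℂ) * f t‖ ^ 2 < ε) :
    ExpL2Equicontinuous 𝓕 x := by
  intro ε hε
  obtain ⟨M, -, hM⟩ := hbdd
  obtain ⟨δ₁, hδ₁, hshift⟩ := hequi ((ε / 4) ^ 2) (by positivity)
  have hlim : Tendsto (fun s => (√(s / δ₁) + ‖1 - Real.exp (-(x * s))‖) * √M) (𝓝 0) (𝓝 0) := by
    simpa using ((by fun_prop : Continuous fun s =>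
      (√(s / δ₁) + ‖1 - Real.exp (-(x * s))‖) * √M).tendsto 0)
  obtain ⟨δ₂, hδ₂, hsmall⟩ :=
    Metric.eventually_nhds_iff.1 ((tendsto_order.1 hlim).2 (ε / 2) (by positivity))
  refine ⟨min δ₁ δ₂, lt_min hδ₁ hδ₂, fun s hs f hf => ?_⟩
  have hsδ₂ : dist s 0 < δ₂ := by
    rw [Real.dist_0_eq_abs, abs_of_pos hs.1]
    exact hs.2.trans_le (min_le_right _ _)
  calc _ ≤ 2 * (ε / 4) + (√(s / δ₁) + ‖1 - Real.exp (-(x * s))‖) * √M :=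
        sqrt_integral_exp_mul_norm_sub_sq_le (h𝓕 f hf) (hzero f hf) (hM f hf).le (by positivity)
          hδ₁ ⟨hs.1, hs.2.trans_le (min_le_left _ _)⟩ fun σ hσ => (hshift σ hσ f hf).le
    _ < ε := by linarith [hsmall hsδ₂]

/-- if `𝓕_x` is `L²`-bounded and `L²`-equicontinuous, then `𝓕` is
exponentially `L²`-equicontinuous at `x`. -/
theorem expL2Equicontinuous_of_l2Equicontinuous (𝓕 : Set (ℝ → ℂ)) (x : ℝ)
    (hx : 0 ≤ x) (h𝓕 : ∀ f ∈ 𝓕, IsLaplacePego f x)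
    (hzero : ∀ f ∈ 𝓕, ∀ t : ℝ, t ≤ 0 → f t = 0)
    (hbdd : L2BoundedFamily 𝓕 x)
    (hequi : ∀ ε : ℝ, 0 < ε → ∃ δ : ℝ, 0 < δ ∧ ∀ s ∈ Set.Ioo (0 : ℝ) δ, ∀ f ∈ 𝓕,
      ∫ t in Set.Ioi (0 : ℝ),
        ‖(Real.exp (-(x * (t + s))) : ℂ) * f (t + s) -
          (Real.exp (-(x * t)) : ℂ) * f t‖ ^ 2 < ε) :
    ExpL2Equicontinuous 𝓕 x :=
  expL2Equicontinuous_of_l2Equicontinuous_general 𝓕 x h𝓕 hzero hbdd hequi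
end
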